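/- arXiv:1411.0763 — 6 statements merged into one kernel-verified Lean document; each statement's English description precedes it below -/
import Mathlib

section
/- For positive integers L ≤ M ≤ N, the convex hull (in the space of real M×N matrices) of the set P of partial permutation matrices equals the set D; that is, conv(P) = D. -/
open Matrix BigOperators

/-- The set `P` of partial permutation matrices: real `M × N` matrices with entries in `{0,1}`,
row sums at most 1, column sums at most 1, and total sum equal to `L`. -/
def PPM (L M N : ℕ) : Set (Matrix (Fin M) (Fin N) ℝ) :=
  {X | (∀ i j, X i j = 0 ∨ X i j = 1) ∧ (∀ i, ∑ j, X i j ≤ 1) ∧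
       (∀ j, ∑ i, X i j ≤ 1) ∧ (∑ i, ∑ j, X i j) = (L : ℝ)}

/-- The set `D`: real `M × N` matrices with nonnegative entries, row sums at most 1,
column sums at most 1, and total sum equal to `L`. -/
def DSet (L M N : ℕ) : Set (Matrix (Fin M) (Fin N) ℝ) :=
  {X | (∀ i j, 0 ≤ X i j) ∧ (∀ i, ∑ j, X i j ≤ 1) ∧
       (∀ j, ∑ i, X i j ≤ 1) ∧ (∑ i, ∑ j, X i j) = (L : ℝ)}

/-- The `k × k` all-ones matrix `J_k`. -/
def Jmat (k : ℕ) : Matrix (Fin k) (Fin k) ℝ := Matrix.of fun _ _ => 1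

lemma permMatrix_apply' {n : Type*} [Fintype n] [DecidableEq n] (σ : Equiv.Perm n) (p q : n) :
    σ.permMatrix ℝ p q = if σ p = q then 1 else 0 := by
  simp [Equiv.Perm.permMatrix, PEquiv.toMatrix_apply, Equiv.toPEquiv_apply, eq_comm]

lemma convex_DSet (L M N : ℕ) : Convex ℝ (DSet L M N) := by
  rintro X ⟨hX0, hXr, hXc, hXs⟩ Y ⟨hY0, hYr, hYc, hYs⟩ a b ha hb hab
  refine ⟨fun i j => ?_, fun i => ?_, fun j => ?_, ?_⟩ <;>
    simp only [Matrix.add_apply, Matrix.smul_apply, smul_eq_mul,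
      Finset.sum_add_distrib, ← Finset.mul_sum]
  · exact add_nonneg (mul_nonneg ha (hX0 i j)) (mul_nonneg hb (hY0 i j))
  · nlinarith [hXr i, hYr i]
  · nlinarith [hXc j, hYc j]
  · rw [hXs, hYs]; nlinarith

/-- Theorem 1: the convex hull of the set of partial permutation matrices `P` is `D`. -/
theorem convexHull_partialPermutationMatrices (L M N : ℕ)
    (hL : 0 < L) (hLM : L ≤ M) (hMN : M ≤ N) :
    convexHull ℝ (PPM L M N) = DSet L M N := by
  apply Set.Subset.antisymm
  · apply convexHull_min _ (convex_DSet L M N)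
    rintro X ⟨h01, hr, hc, hs⟩
    refine ⟨fun i j => ?_, hr, hc, hs⟩
    rcases h01 i j with h | h <;> simp [h]
  rintro X ⟨hX0, hXr, hXc, hXs⟩
  have hNL : L ≤ N := hLM.trans hMN
  set K := M + (N - L) with hKdef
  let eR : Fin M ⊕ Fin (N - L) ≃ Fin K := finSumFinEquiv
  let eC : Fin N ⊕ Fin (M - L) ≃ Fin K := finSumFinEquiv.trans (finCongr (by omega))
  set r : Fin M → ℝ := fun i => ∑ j, X i j with hrdef
  set c : Fin N → ℝ := fun j => ∑ i, X i j with hcdef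
  have hrsum : ∑ i, r i = (L : ℝ) := hXs
  have hcsum : ∑ j, c j = (L : ℝ) := by rw [hcdef]; rw [← hXs]; exact Finset.sum_comm
  have hr0 : ∀ i, 0 ≤ r i := fun i => Finset.sum_nonneg fun j _ => hX0 i j
  have hc0 : ∀ j, 0 ≤ c j := fun j => Finset.sum_nonneg fun i _ => hX0 i j
  -- the padded square matrix
  let Yb : (Fin M ⊕ Fin (N - L)) → (Fin N ⊕ Fin (M - L)) → ℝ := fun p q =>
    match p, q with
    | .inl i, .inl j => X i j
    | .inl i, .inr _ => (1 - r i) / ((M - L : ℕ) : ℝ)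
    | .inr _, .inl j => (1 - c j) / ((N - L : ℕ) : ℝ)
    | .inr _, .inr _ => 0
  let Y : Matrix (Fin K) (Fin K) ℝ := fun p q => Yb (eR.symm p) (eC.symm q)
  have hY0 : ∀ p q, 0 ≤ Y p q := by
    intro p q
    show 0 ≤ Yb (eR.symm p) (eC.symm q)
    rcases eR.symm p with i | b <;> rcases eC.symm q with j | a
    · exact hX0 i j
    · exact div_nonneg (by linarith [hXr i]) (Nat.cast_nonneg _)
    · exact div_nonneg (by linarith [hXc j]) (Nat.cast_nonneg _)
    · exact le_refl 0
  have hYrow : ∀ p, ∑ q, Y p q = 1 := by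
    intro p
    have : ∑ q, Y p q = ∑ q', Yb (eR.symm p) q' :=
      Equiv.sum_comp eC.symm (fun q' => Yb (eR.symm p) q')
    rw [this]
    rcases eR.symm p with i | b
    · -- row of type inl i
      rw [Fintype.sum_sum_type]
      simp only [Yb]
      rw [Finset.sum_const, Finset.card_univ, Fintype.card_fin]
      rcases eq_or_lt_of_le hLM with hML | hML
      · -- M = L : the right block is empty and r i = 1
        have hri : r i = 1 := by
          by_contra hne
          have hlt : r i < 1 := lt_of_le_of_ne (hXr i) hne
          have : ∑ i', r i' < ∑ _i' : Fin M, (1 : ℝ) :=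
            Finset.sum_lt_sum (fun i' _ => hXr i') ⟨i, Finset.mem_univ i, hlt⟩
          rw [hrsum, Finset.sum_const, Finset.card_univ, Fintype.card_fin] at this
          simp only [nsmul_eq_mul, mul_one] at this
          rw [← hML] at this
          exact absurd this (lt_irrefl _)
        have : M - L = 0 := by omega
        rw [this]
        simpa using hri
      · have hMLpos : (0:ℝ) < ((M - L : ℕ) : ℝ) := by
          have : 0 < M - L := by omega
          exact_mod_cast this
        rw [nsmul_eq_mul]
        rw [mul_div_cancel₀ _ (ne_of_gt hMLpos)]
        show r i + (1 - r i) = 1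
        ring
    · -- row of type inr b : exists only if N - L > 0
      have hNLpos : 0 < N - L := b.pos
      rw [Fintype.sum_sum_type]
      simp only [Yb]
      rw [Finset.sum_const, Finset.card_univ, Fintype.card_fin, smul_zero, add_zero,
        ← Finset.sum_div]
      have : ∑ j, (1 - c j) = ((N - L : ℕ) : ℝ) := by
        rw [Finset.sum_sub_distrib, hcsum, Finset.sum_const, Finset.card_univ, Fintype.card_fin]
        rw [Nat.cast_sub hNL]
        simp
      rw [this, div_self]
      exact ne_of_gt (by exact_mod_cast hNLpos)
  have hYcol : ∀ q, ∑ p, Y p q = 1 := by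
    intro q
    have : ∑ p, Y p q = ∑ p', Yb p' (eC.symm q) :=
      Equiv.sum_comp eR.symm (fun p' => Yb p' (eC.symm q))
    rw [this]
    rcases eC.symm q with j | a
    · rw [Fintype.sum_sum_type]
      simp only [Yb]
      rw [Finset.sum_const, Finset.card_univ, Fintype.card_fin]
      rcases eq_or_lt_of_le hNL with hNLe | hNLlt
      · have hcj : c j = 1 := by
          by_contra hne
          have hlt : c j < 1 := lt_of_le_of_ne (hXc j) hne
          have : ∑ j', c j' < ∑ _j' : Fin N, (1 : ℝ) :=
            Finset.sum_lt_sum (fun j' _ => hXc j') ⟨j, Finset.mem_univ j, hlt⟩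
          rw [hcsum, Finset.sum_const, Finset.card_univ, Fintype.card_fin] at this
          simp only [nsmul_eq_mul, mul_one] at this
          rw [← hNLe] at this
          exact absurd this (lt_irrefl _)
        have : N - L = 0 := by omega
        rw [this]
        simpa using hcj
      · have hpos : (0:ℝ) < ((N - L : ℕ) : ℝ) := by
          have : 0 < N - L := by omega
          exact_mod_cast this
        rw [nsmul_eq_mul, mul_div_cancel₀ _ (ne_of_gt hpos)]
        show c j + (1 - c j) = 1
        ring
    · have hMLpos : 0 < M - L := a.pos
      rw [Fintype.sum_sum_type]
      simp only [Yb]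
      rw [Finset.sum_const, Finset.card_univ, Fintype.card_fin, smul_zero, add_zero,
        ← Finset.sum_div]
      have : ∑ i, (1 - r i) = ((M - L : ℕ) : ℝ) := by
        rw [Finset.sum_sub_distrib, hrsum, Finset.sum_const, Finset.card_univ, Fintype.card_fin]
        rw [Nat.cast_sub hLM]
        simp
      rw [this, div_self]
      exact ne_of_gt (by exact_mod_cast hMLpos)
  have hYds : Y ∈ doublyStochastic ℝ (Fin K) := by
    rw [mem_doublyStochastic_iff_sum]
    exact ⟨fun i j => hY0 i j, hYrow, hYcol⟩
  obtain ⟨w, hw0, hw1, hwY⟩ := exists_eq_sum_perm_of_mem_doublyStochastic hYds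
  -- entries of Y as convex combinations of permutation matrix entries
  have hYentry : ∀ p q, ∑ σ : Equiv.Perm (Fin K), w σ * σ.permMatrix ℝ p q = Y p q := by
    intro p q
    rw [← hwY, Matrix.sum_apply]
    simp
  -- the top-left blocks
  let Bmat : Equiv.Perm (Fin K) → Matrix (Fin M) (Fin N) ℝ := fun σ i j =>
    σ.permMatrix ℝ (eR (Sum.inl i)) (eC (Sum.inl j))
  -- support condition for positive-weight permutations
  have hsup : ∀ σ : Equiv.Perm (Fin K), 0 < w σ → ∀ b a,
      σ (eR (Sum.inr b)) ≠ eC (Sum.inr a) := by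
    intro σ hσ b a hcon
    have hz : Y (eR (Sum.inr b)) (eC (Sum.inr a)) = 0 := by
      show Yb (eR.symm (eR (Sum.inr b))) (eC.symm (eC (Sum.inr a))) = 0
      rw [Equiv.symm_apply_apply, Equiv.symm_apply_apply]
    have hsum0 : ∑ τ : Equiv.Perm (Fin K),
        w τ * τ.permMatrix ℝ (eR (Sum.inr b)) (eC (Sum.inr a)) = 0 := by
      rw [hYentry]; exact hz
    have hnn : ∀ τ ∈ (Finset.univ : Finset (Equiv.Perm (Fin K))),
        0 ≤ w τ * τ.permMatrix ℝ (eR (Sum.inr b)) (eC (Sum.inr a)) := by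
      intro τ _
      apply mul_nonneg (hw0 τ)
      rw [permMatrix_apply']
      split <;> norm_num
    have := (Finset.sum_eq_zero_iff_of_nonneg hnn).mp hsum0 σ (Finset.mem_univ σ)
    rw [permMatrix_apply', if_pos hcon, mul_one] at this
    exact absurd this (ne_of_gt hσ)
  -- counting: sum over j of an indicator
  have hsumN : ∀ x : Fin K, (∑ j : Fin N, if x = eC (Sum.inl j) then (1:ℝ) else 0)
      = if (eC.symm x).isLeft then 1 else 0 := by
    intro x
    have hcond : ∀ j : Fin N, (x = eC (Sum.inl j)) = (eC.symm x = Sum.inl j) := by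
      intro j
      simp [Equiv.symm_apply_eq]
    simp only [hcond]
    rcases h : eC.symm x with j0 | a0
    · simp [Sum.inl.injEq, eq_comm]
    · simp
  -- each positive-weight block is a partial permutation matrix
  have hBmem : ∀ σ : Equiv.Perm (Fin K), 0 < w σ → Bmat σ ∈ PPM L M N := by
    intro σ hσ
    refine ⟨fun i j => ?_, fun i => ?_, fun j => ?_, ?_⟩
    · show σ.permMatrix ℝ (eR (Sum.inl i)) (eC (Sum.inl j)) = 0 ∨
        σ.permMatrix ℝ (eR (Sum.inl i)) (eC (Sum.inl j)) = 1
      rw [permMatrix_apply']; split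
      · exact Or.inr rfl
      · exact Or.inl rfl
    · show (∑ j, σ.permMatrix ℝ (eR (Sum.inl i)) (eC (Sum.inl j))) ≤ 1
      simp only [permMatrix_apply']
      rw [hsumN (σ (eR (Sum.inl i)))]
      split <;> norm_num
    · show (∑ i, σ.permMatrix ℝ (eR (Sum.inl i)) (eC (Sum.inl j))) ≤ 1
      have hinj : ∀ x ∈ (Finset.univ : Finset (Fin M)), ∀ y ∈ Finset.univ,
          eR (Sum.inl x) = eR (Sum.inl y) → x = y := by
        intro x _ y _ h
        simpa using eR.injective h
      have himg : ∑ p ∈ Finset.univ.image (fun i : Fin M => eR (Sum.inl i)),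
          σ.permMatrix ℝ p (eC (Sum.inl j))
          = ∑ i, σ.permMatrix ℝ (eR (Sum.inl i)) (eC (Sum.inl j)) := Finset.sum_image hinj
      rw [← himg]
      calc ∑ p ∈ Finset.univ.image (fun i : Fin M => eR (Sum.inl i)),
              σ.permMatrix ℝ p (eC (Sum.inl j))
          ≤ ∑ p : Fin K, σ.permMatrix ℝ p (eC (Sum.inl j)) :=
            Finset.sum_le_univ_sum_of_nonneg (fun p => by
              rw [permMatrix_apply']; split <;> norm_num)
        _ = 1 := by
            simp only [permMatrix_apply']
            rw [Equiv.sum_comp σ (fun t => if t = eC (Sum.inl j) then (1:ℝ) else 0)]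
            simp
    · show (∑ i, ∑ j, σ.permMatrix ℝ (eR (Sum.inl i)) (eC (Sum.inl j))) = (L : ℝ)
      simp only [permMatrix_apply']
      have hbot : ∀ b : Fin (N - L), ((eC.symm (σ (eR (Sum.inr b)))).isLeft : Prop) := by
        intro b
        rcases h : eC.symm (σ (eR (Sum.inr b))) with j' | a
        · simp
        · exact absurd ((Equiv.symm_apply_eq eC).mp h) (hsup σ hσ b a)
      have hall : ∑ p : Fin M ⊕ Fin (N - L),
          (if (eC.symm (σ (eR p))).isLeft then (1:ℝ) else 0) = (N : ℝ) := by
        rw [Equiv.sum_comp eR (fun q => if (eC.symm (σ q)).isLeft then (1:ℝ) else 0),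
          Equiv.sum_comp σ (fun t => if (eC.symm t).isLeft then (1:ℝ) else 0),
          ← Equiv.sum_comp eC (fun t => if (eC.symm t).isLeft then (1:ℝ) else 0)]
        simp only [Equiv.symm_apply_apply, Fintype.sum_sum_type, Sum.isLeft_inl, Sum.isLeft_inr,
          if_true, if_false]
        simp
      have hbotsum : ∑ b : Fin (N - L),
          (if (eC.symm (σ (eR (Sum.inr b)))).isLeft then (1:ℝ) else 0) = ((N - L : ℕ) : ℝ) := by
        rw [Finset.sum_congr rfl (fun b _ => if_pos (hbot b))]
        simp
      rw [Fintype.sum_sum_type, hbotsum] at hall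
      have hcast : ((N - L : ℕ) : ℝ) = (N : ℝ) - (L : ℝ) := by
        rw [Nat.cast_sub hNL]
      calc ∑ i, ∑ j, (if σ (eR (Sum.inl i)) = eC (Sum.inl j) then (1:ℝ) else 0)
          = ∑ i : Fin M, (if (eC.symm (σ (eR (Sum.inl i)))).isLeft then (1:ℝ) else 0) :=
            Finset.sum_congr rfl fun i _ => hsumN _
        _ = (L : ℝ) := by linarith
  -- X is the convex combination of the blocks
  have hXrep : ∑ σ : Equiv.Perm (Fin K), w σ • Bmat σ = X := by
    ext i j
    rw [Matrix.sum_apply]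
    simp only [Matrix.smul_apply, smul_eq_mul]
    show ∑ τ : Equiv.Perm (Fin K), w τ * τ.permMatrix ℝ (eR (Sum.inl i)) (eC (Sum.inl j)) = X i j
    rw [hYentry (eR (Sum.inl i)) (eC (Sum.inl j))]
    show Yb (eR.symm (eR (Sum.inl i))) (eC.symm (eC (Sum.inl j))) = X i j
    rw [Equiv.symm_apply_apply, Equiv.symm_apply_apply]
  set s : Finset (Equiv.Perm (Fin K)) := Finset.univ.filter (fun σ => 0 < w σ) with hsdef
  have hws : ∑ σ ∈ s, w σ = 1 := by
    rw [hsdef, Finset.sum_filter_of_ne (fun σ _ h => lt_of_le_of_ne (hw0 σ) (Ne.symm h))]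
    exact hw1
  have hXrep' : ∑ σ ∈ s, w σ • Bmat σ = X := by
    rw [hsdef, Finset.sum_filter_of_ne]
    · exact hXrep
    · intro σ _ h
      by_contra hn
      apply h
      have hwz : w σ = 0 := le_antisymm (not_lt.mp hn) (hw0 σ)
      rw [hwz, zero_smul]
  rw [← hXrep', ← Finset.centerMass_eq_of_sum_1 s Bmat hws]
  exact Finset.centerMass_mem_convexHull s (fun σ _ => hw0 σ) (by rw [hws]; norm_num)
    (fun σ hσ => hBmem σ (Finset.mem_filter.mp hσ).2)
end

section
/- For positive integers L ≤ M ≤ N, the set of extreme points of D is exactly P; i.e., a matrix X ∈ D is an extreme point of D if and only if X ∈ P. -/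
open Matrix BigOperators

/-!
A 0/1 matrix is an extreme point of the cube `[0,1]^(M × N)`, which contains `D`.
Conversely, border `X ∈ D` with a slack column and a slack row (corner `0`): the result is
nonnegative with integer row and column sums. A line containing a non-integral entry then contains
at least two, so the non-integral cells are at least as many as the lines they meet, and counting
dimensions gives a nonzero matrix supported on them with zero row and column sums. Moving `X` by a
small multiple of its block in either direction stays in `D`, so `X` is not extreme.
-/

open Finset Filter Topology

theorem Module.exists_ne_zero_forall_eq_zero_of_card_lt {K V ι : Type*} [Field K]
    [AddCommGroup V] [Module K V] [FiniteDimensional K V] [Fintype ι]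
    (φ : ι → Module.Dual K V) (h : Fintype.card ι < Module.finrank K V) :
    ∃ v ≠ 0, ∀ i, φ i v = 0 := by
  obtain ⟨v, hv, hv0⟩ := (Submodule.ne_bot_iff _).1 <|
    (LinearMap.pi φ).ker_ne_bot_of_finrank_lt (by simpa using h)
  exact ⟨v, hv0, fun i => congrFun (LinearMap.mem_ker.1 hv) i⟩

theorem Finset.two_mul_card_image_le {α β : Type*} [DecidableEq β] {S : Finset α} {f : α → β}
    (h : ∀ p ∈ S, 2 ≤ #{q ∈ S | f q = f p}) : 2 * #(S.image f) ≤ #S := by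
  rw [card_eq_sum_card_image f S, mul_comm, ← smul_eq_mul]
  refine card_nsmul_le_sum _ _ _ fun b hb => ?_
  obtain ⟨p, hp, rfl⟩ := mem_image.1 hb
  exact h p hp

theorem Matrix.exists_ne_zero_row_col_sums_eq_zero {K α β : Type*} [Field K] [Fintype α]
    [Fintype β] [DecidableEq α] [DecidableEq β] {S : Finset (α × β)} (hS : S.Nonempty)
    (hrow : ∀ p ∈ S, 2 ≤ #{q ∈ S | q.1 = p.1}) (hcol : ∀ p ∈ S, 2 ≤ #{q ∈ S | q.2 = p.2}) :
    ∃ d : Matrix α β K, d ≠ 0 ∧ (∀ i j, (i, j) ∉ S → d i j = 0) ∧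
      (∀ i, ∑ j, d i j = 0) ∧ ∀ j, ∑ i, d i j = 0 := by
  obtain ⟨c₀, hc₀⟩ := hS.image Prod.snd
  -- Fewer equations than unknowns: vanishing off `S`, the sums of the rows met by `S`, and the sums
  -- of the columns met by `S` other than `c₀`, whose sum is then forced by the total.
  let φ : (Sᶜ : Finset (α × β)) ⊕ S.image Prod.fst ⊕ (S.image Prod.snd).erase c₀ →
      Module.Dual K (Matrix α β K) :=
    Sum.elim (fun p => entryLinearMap K K p.1.1 p.1.2)
      (Sum.elim (fun i => ∑ j, entryLinearMap K K i.1 j) (fun j => ∑ i, entryLinearMap K K i j.1))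
  obtain ⟨d, hd0, hd⟩ := Module.exists_ne_zero_forall_eq_zero_of_card_lt φ <| by
    have hR := two_mul_card_image_le hrow
    have hC := two_mul_card_image_le hcol
    have hC₀ := card_pos.2 (hS.image Prod.snd)
    have hSuniv := S.card_le_univ
    simp only [Fintype.card_sum, Fintype.card_coe, card_compl, Fintype.card_prod,
      card_erase_of_mem hc₀, Module.finrank_matrix, Module.finrank_self, mul_one] at hSuniv ⊢
    omega
  have hsupp : ∀ i j, (i, j) ∉ S → d i j = 0 := fun i j h => by
    simpa [φ] using hd (.inl ⟨(i, j), by simpa using h⟩)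
  have hrow0 : ∀ i, ∑ j, d i j = 0 := fun i => by
    by_cases hi : i ∈ S.image Prod.fst
    · simpa [φ] using hd (.inr (.inl ⟨i, hi⟩))
    · exact sum_eq_zero fun j _ => hsupp i j fun h => hi (mem_image_of_mem Prod.fst h)
  have hcol0 : ∀ j ≠ c₀, ∑ i, d i j = 0 := fun j hj => by
    by_cases hj' : j ∈ S.image Prod.snd
    · simpa [φ] using hd (.inr (.inr ⟨j, mem_erase.2 ⟨hj, hj'⟩⟩))
    · exact sum_eq_zero fun i _ => hsupp i j fun h => hj' (mem_image_of_mem Prod.snd h)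
  refine ⟨d, hd0, hsupp, hrow0, fun j => ?_⟩
  rcases ne_or_eq j c₀ with hj | rfl
  · exact hcol0 j hj
  · have htotal : ∑ j, ∑ i, d i j = 0 := by rw [sum_comm]; exact sum_eq_zero fun i _ => hrow0 i
    rwa [Fintype.sum_eq_single j hcol0] at htotal

theorem exists_ne_not_int_of_sum_int {R α : Type*} [Ring R] [Fintype α] [DecidableEq α]
    {f : α → R} (hsum : ∑ a, f a ∈ Set.range ((↑) : ℤ → R)) {a : α}
    (ha : f a ∉ Set.range ((↑) : ℤ → R)) : ∃ b ≠ a, f b ∉ Set.range ((↑) : ℤ → R) := by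
  by_contra! h
  have hrest : ∑ b ∈ univ.erase a, f b ∈ (Int.castAddHom R).range :=
    AddSubgroup.sum_mem _ fun b hb => h b (ne_of_mem_erase hb)
  rw [← add_sum_erase _ _ (mem_univ a)] at hsum
  have hfa := AddSubgroup.sub_mem _ (show _ ∈ (Int.castAddHom R).range from hsum) hrest
  rw [add_sub_cancel_right] at hfa
  exact ha hfa

theorem Matrix.exists_ne_zero_row_col_sums_eq_zero_of_not_int {K α β : Type*} [Field K]
    [Fintype α] [Fintype β] [DecidableEq α] [DecidableEq β] {Y : Matrix α β K}
    (hrow : ∀ i, ∑ j, Y i j ∈ Set.range ((↑) : ℤ → K))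
    (hcol : ∀ j, ∑ i, Y i j ∈ Set.range ((↑) : ℤ → K)) {i₀ : α} {j₀ : β}
    (hY : Y i₀ j₀ ∉ Set.range ((↑) : ℤ → K)) :
    ∃ d : Matrix α β K, d ≠ 0 ∧ (∀ i j, Y i j ∈ Set.range ((↑) : ℤ → K) → d i j = 0) ∧
      (∀ i, ∑ j, d i j = 0) ∧ ∀ j, ∑ i, d i j = 0 := by
  classical
  let S : Finset (α × β) := {p | Y p.1 p.2 ∉ Set.range ((↑) : ℤ → K)}
  have hS : ∀ {p}, p ∈ S ↔ Y p.1 p.2 ∉ Set.range ((↑) : ℤ → K) := by simp [S]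
  obtain ⟨d, hd0, hsupp, hrow0, hcol0⟩ := exists_ne_zero_row_col_sums_eq_zero (K := K) (S := S)
    ⟨(i₀, j₀), hS.2 hY⟩
    (fun p hp => by
      obtain ⟨j, hj, hYj⟩ := exists_ne_not_int_of_sum_int (hrow p.1) (hS.1 hp)
      exact one_lt_card.2 ⟨p, mem_filter.2 ⟨hp, rfl⟩, (p.1, j), mem_filter.2 ⟨hS.2 hYj, rfl⟩,
        fun h => hj (congrArg Prod.snd h).symm⟩)
    (fun p hp => by
      obtain ⟨i, hi, hYi⟩ :=
        exists_ne_not_int_of_sum_int (f := fun i => Y i p.2) (hcol p.2) (hS.1 hp)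
      exact one_lt_card.2 ⟨p, mem_filter.2 ⟨hp, rfl⟩, (i, p.2), mem_filter.2 ⟨hS.2 hYi, rfl⟩,
        fun h => hi (congrArg Prod.fst h).symm⟩)
  exact ⟨d, hd0, fun i j h => hsupp i j fun hp => hS.1 hp h, hrow0, hcol0⟩

theorem exists_pos_forall_mul_abs_le {α : Type*} [Finite α] {f g : α → ℝ}
    (hf : ∀ x, 0 ≤ f x) (hfg : ∀ x, g x ≠ 0 → 0 < f x) :
    ∃ ε > 0, ∀ x, ε * |g x| ≤ f x := by
  have h : ∀ᶠ ε in 𝓝[>] (0 : ℝ), ∀ x, ε * |g x| ≤ f x :=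
    eventually_all.2 fun x => by
      rcases eq_or_ne (g x) 0 with hx | hx
      · simp [hx, hf x]
      · have hlim : Tendsto (fun ε : ℝ => ε * |g x|) (𝓝[>] 0) (𝓝 0) :=
          ((continuous_id.mul continuous_const).tendsto' 0 0 (by simp)).mono_left
            nhdsWithin_le_nhds
        exact (hlim.eventually (gt_mem_nhds (hfg x hx))).mono fun _ => le_of_lt
  obtain ⟨ε, hε, hε0⟩ := (h.and self_mem_nhdsWithin).exists
  exact ⟨ε, hε0, hε⟩

theorem notMem_extremePoints_of_add_mem_of_sub_mem {𝕜 E : Type*} [Field 𝕜] [LinearOrder 𝕜]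
    [IsStrictOrderedRing 𝕜] [AddCommGroup E] [Module 𝕜 E] {A : Set E} {x v : E} (hv : v ≠ 0)
    (hadd : x + v ∈ A) (hsub : x - v ∈ A) : x ∉ A.extremePoints 𝕜 := fun hx => by
  refine hv (sub_eq_self.1 (hx.2 hsub hadd ⟨1 / 2, 1 / 2, by norm_num, by norm_num, by norm_num,
    ?_⟩))
  rw [← smul_add, sub_add_add_cancel, ← two_smul 𝕜, smul_smul]
  norm_num

section SlackExtend

variable {ι κ : Type*} [Fintype ι] [Fintype κ]

-- The corner entry is the integer `0`, so perturbations supported on non-integral entries fix it,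
-- and with it the total sum of the `ι × κ` block.
def slackExtend (X : Matrix ι κ ℝ) : Matrix (Option ι) (Option κ) ℝ
  | some i, some j => X i j
  | some i, none => 1 - ∑ j, X i j
  | none, some j => 1 - ∑ i, X i j
  | none, none => 0

theorem slackExtend_nonneg_iff {X : Matrix ι κ ℝ} :
    (∀ a b, 0 ≤ slackExtend X a b) ↔
      (∀ i j, 0 ≤ X i j) ∧ (∀ i, ∑ j, X i j ≤ 1) ∧ ∀ j, ∑ i, X i j ≤ 1 := by
  simp only [Option.forall, slackExtend, sub_nonneg, le_refl, forall_and]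
  tauto

theorem sum_slackExtend_row_some (X : Matrix ι κ ℝ) (i : ι) :
    ∑ b, slackExtend X (some i) b = 1 := by
  simp [Fintype.sum_option, slackExtend]

theorem sum_slackExtend_row_none (X : Matrix ι κ ℝ) :
    ∑ b, slackExtend X none b = Fintype.card κ - ∑ i, ∑ j, X i j := by
  simp [Fintype.sum_option, slackExtend, sum_comm (f := X)]

theorem sum_slackExtend_col_some (X : Matrix ι κ ℝ) (j : κ) :
    ∑ a, slackExtend X a (some j) = 1 := by
  simp [Fintype.sum_option, slackExtend]

theorem sum_slackExtend_col_none (X : Matrix ι κ ℝ) :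
    ∑ a, slackExtend X a none = Fintype.card ι - ∑ i, ∑ j, X i j := by
  simp [Fintype.sum_option, slackExtend]

theorem slackExtend_add_smul_submatrix (X : Matrix ι κ ℝ) {d : Matrix (Option ι) (Option κ) ℝ}
    (hrow : ∀ a, ∑ b, d a b = 0) (hcol : ∀ b, ∑ a, d a b = 0) (hd : d none none = 0) (t : ℝ) :
    slackExtend (X + t • d.submatrix some some) = slackExtend X + t • d := by
  ext (_ | i) (_ | j)
  · simp [slackExtend, hd]
  · have hsum := hcol (some j)
    rw [Fintype.sum_option] at hsum
    simp [slackExtend, sum_add_distrib, ← mul_sum]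
    linear_combination -t * hsum
  · have hsum := hrow (some i)
    rw [Fintype.sum_option] at hsum
    simp [slackExtend, sum_add_distrib, ← mul_sum]
    linear_combination -t * hsum
  · simp [slackExtend]

theorem sum_submatrix_some_eq_zero {d : Matrix (Option ι) (Option κ) ℝ}
    (hrow : ∀ a, ∑ b, d a b = 0) (hcol : ∀ b, ∑ a, d a b = 0) (hd : d none none = 0) :
    ∑ i, ∑ j, d (some i) (some j) = 0 := by
  have hslack := hcol none
  simp only [Fintype.sum_option, hd, zero_add] at hslack
  calc ∑ i, ∑ j, d (some i) (some j) = ∑ i, -d (some i) none :=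
        sum_congr rfl fun i _ => by
          have hsum := hrow (some i)
          rw [Fintype.sum_option] at hsum
          linarith
    _ = 0 := by rw [sum_neg_distrib, hslack, neg_zero]

theorem submatrix_some_ne_zero {d : Matrix (Option ι) (Option κ) ℝ}
    (hrow : ∀ a, ∑ b, d a b = 0) (hcol : ∀ b, ∑ a, d a b = 0) (hd : d none none = 0)
    (hd0 : d ≠ 0) : d.submatrix some some ≠ 0 := by
  refine fun h => hd0 ?_
  have hblock : ∀ i j, d (some i) (some j) = 0 := fun i j => congrFun (congrFun h i) j
  ext (_ | i) (_ | j)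
  · exact hd
  · simpa [Fintype.sum_option, hblock] using hcol (some j)
  · simpa [Fintype.sum_option, hblock] using hrow (some i)
  · exact hblock i j

end SlackExtend

section DSet

variable {L M N : ℕ} {X : Matrix (Fin M) (Fin N) ℝ}

theorem mem_DSet_iff :
    X ∈ DSet L M N ↔ (∀ a b, 0 ≤ slackExtend X a b) ∧ ∑ i, ∑ j, X i j = L := by
  rw [slackExtend_nonneg_iff, and_assoc, and_assoc]
  rfl

theorem le_one_of_mem_DSet (hX : X ∈ DSet L M N) (i : Fin M) (j : Fin N) : X i j ≤ 1 :=
  (single_le_sum (fun j _ => hX.1 i j) (mem_univ j)).trans (hX.2.1 i)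

theorem PPM_subset_extremePoints_DSet : PPM L M N ⊆ (DSet L M N).extremePoints ℝ := by
  intro X hX
  have hXD : X ∈ DSet L M N := ⟨fun i j => by rcases hX.1 i j with h | h <;> simp [h], hX.2⟩
  have hcube : of.symm X ∈ (Set.univ.pi fun _ : Fin M => Set.univ.pi fun _ : Fin N =>
      Set.Icc (0 : ℝ) 1).extremePoints ℝ := by
    simpa only [extremePoints_pi, Set.extremePoints_Icc zero_le_one, Set.mem_univ_pi,
      Set.mem_insert_iff, Set.mem_singleton_iff, of_symm_apply] using hX.1
  exact inter_extremePoints_subset_extremePoints_of_subset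
    (fun Y hY i _ j _ => ⟨hY.1 i j, le_one_of_mem_DSet hY i j⟩) ⟨hXD, hcube⟩

theorem notMem_extremePoints_DSet (hX : X ∈ DSet L M N) {i₀ : Fin M} {j₀ : Fin N}
    (h0 : X i₀ j₀ ≠ 0) (h1 : X i₀ j₀ ≠ 1) : X ∉ (DSet L M N).extremePoints ℝ := by
  obtain ⟨hY0, htot⟩ := mem_DSet_iff.1 hX
  have hfrac : slackExtend X (some i₀) (some j₀) ∉ Set.range ((↑) : ℤ → ℝ) := by
    rintro ⟨n, hn⟩
    have h0' : (0 : ℝ) < n := hn ▸ (hX.1 i₀ j₀).lt_of_ne' h0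
    have h1' : (n : ℝ) < 1 := hn ▸ (le_one_of_mem_DSet hX i₀ j₀).lt_of_ne h1
    norm_cast at h0' h1'
    omega
  have hrowZ : ∀ a, ∑ b, slackExtend X a b ∈ Set.range ((↑) : ℤ → ℝ) := by
    rintro (_ | i)
    · exact ⟨N - L, by rw [sum_slackExtend_row_none, htot]; simp⟩
    · exact ⟨1, by rw [sum_slackExtend_row_some]; simp⟩
  have hcolZ : ∀ b, ∑ a, slackExtend X a b ∈ Set.range ((↑) : ℤ → ℝ) := by
    rintro (_ | j)
    · exact ⟨M - L, by rw [sum_slackExtend_col_none, htot]; simp⟩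
    · exact ⟨1, by rw [sum_slackExtend_col_some]; simp⟩
  obtain ⟨d, hd0, hdsupp, hrow, hcol⟩ :=
    exists_ne_zero_row_col_sums_eq_zero_of_not_int hrowZ hcolZ hfrac
  have hcorner : d none none = 0 := hdsupp none none ⟨0, by simp [slackExtend]⟩
  obtain ⟨ε, hε, hεd⟩ := exists_pos_forall_mul_abs_le
    (f := fun p : Option (Fin M) × Option (Fin N) => slackExtend X p.1 p.2)
    (g := fun p => d p.1 p.2) (fun p => hY0 p.1 p.2)
    (fun p hp => (hY0 p.1 p.2).lt_of_ne' fun h => hp (hdsupp p.1 p.2 ⟨0, by simp [h]⟩))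
  have hmem : ∀ t, |t| ≤ ε → X + t • d.submatrix some some ∈ DSet L M N := fun t ht => by
    rw [mem_DSet_iff, slackExtend_add_smul_submatrix X hrow hcol hcorner]
    refine ⟨fun a b => ?_, ?_⟩
    · have hbound : |t * d a b| ≤ slackExtend X a b := by
        rw [abs_mul]
        exact (mul_le_mul_of_nonneg_right ht (abs_nonneg _)).trans (hεd (a, b))
      simp only [Matrix.add_apply, Matrix.smul_apply, smul_eq_mul]
      linarith [neg_abs_le (t * d a b)]
    · simp [sum_add_distrib, ← mul_sum, sum_submatrix_some_eq_zero hrow hcol hcorner, htot]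
  refine notMem_extremePoints_of_add_mem_of_sub_mem
    (smul_ne_zero hε.ne' (submatrix_some_ne_zero hrow hcol hcorner hd0))
    (hmem ε (abs_of_pos hε).le) ?_
  simpa [sub_eq_add_neg] using hmem (-ε) (by rw [abs_neg, abs_of_pos hε])

end DSet

theorem extremePoints_DSet_eq_PPM_general (L M N : ℕ) :
    Set.extremePoints ℝ (DSet L M N) = PPM L M N := by
  refine subset_antisymm (fun X hX => ?_) PPM_subset_extremePoints_DSet
  have hXD := extremePoints_subset hX
  refine ⟨fun i j => ?_, hXD.2⟩
  by_contra! h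
  exact notMem_extremePoints_DSet hXD h.1 h.2 hX

/-- The set of extreme points of `D` is exactly `P`. -/
theorem extremePoints_DSet_eq_PPM (L M N : ℕ)
    (hL : 0 < L) (hLM : L ≤ M) (hMN : M ≤ N) :
    Set.extremePoints ℝ (DSet L M N) = PPM L M N :=
  extremePoints_DSet_eq_PPM_general L M N
end

section
/- For positive integers L ≤ M ≤ N and any continuous concave function f : ℝ^{M×N} → ℝ, the minimum of f over D is attained at some point of P; that is, there exists X* ∈ P with f(X*) ≤ f(X) for all X ∈ D. -/
open Matrix BigOperators

/-!
A concave function on the convex hull of a finite set is minimised at a point of that set, so it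
suffices to show `D ⊆ convexHull P`. Pad `X ∈ D` with `N - L` slack rows and `M - L` slack
columns to an `(M + N - L)`-square doubly stochastic matrix whose slack–slack corner vanishes.
By Birkhoff's theorem the padded matrix is a convex combination of permutation matrices, and
since the corner is zero only permutation matrices with zero corner occur. Such a permutation
sends every slack row to a genuine column, so exactly `N - (N - L) = L` genuine rows go to
genuine columns: its top-left block lies in `P`.
-/

open Finset

theorem mem_convexHull_inter_ker_of_nonneg {𝕜 E : Type*} [Field 𝕜] [LinearOrder 𝕜]
    [IsStrictOrderedRing 𝕜] [AddCommGroup E] [Module 𝕜 E] {s : Set E} {x : E} (φ : E →ₗ[𝕜] 𝕜)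
    (hs : ∀ y ∈ s, 0 ≤ φ y) (hx : x ∈ convexHull 𝕜 s) (hφx : φ x = 0) :
    x ∈ convexHull 𝕜 (s ∩ LinearMap.ker φ) := by
  classical
  obtain ⟨ι, _, w, z, hw₀, hw₁, hz, rfl⟩ := mem_convexHull_iff_exists_fintype.mp hx
  have hterm : ∀ i, w i * φ (z i) = 0 := by
    have hsum : ∑ i, w i * φ (z i) = 0 := by simpa using hφx
    exact fun i => (sum_eq_zero_iff_of_nonneg fun j _ =>
      mul_nonneg (hw₀ j) (hs _ (hz j))).mp hsum i (mem_univ i)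
  rw [← centerMass_eq_of_sum_1 _ _ hw₁, ← centerMass_filter_ne_zero]
  refine centerMass_mem_convexHull _ (fun i _ => hw₀ i) ?_ fun i hi => ⟨hz i, ?_⟩
  · rw [sum_filter_ne_zero, hw₁]
    exact one_pos
  · exact (mul_eq_zero.mp (hterm i)).resolve_left (mem_filter.mp hi).2

theorem mem_convexHull_toMatrix_of_sum_eq_one {r c : Type*} [Fintype r] [DecidableEq r]
    [Fintype c] [DecidableEq c] (e : r ≃ c) {W : Matrix r c ℝ} (h0 : ∀ i j, 0 ≤ W i j)
    (hrow : ∀ i, ∑ j, W i j = 1) (hcol : ∀ j, ∑ i, W i j = 1) :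
    W ∈ convexHull ℝ (Set.range fun σ : r ≃ c => σ.toPEquiv.toMatrix) := by
  have hsq : W.submatrix id e ∈ doublyStochastic ℝ r :=
    mem_doublyStochastic_iff_sum.mpr
      ⟨fun i j => h0 _ _, fun i => (e.sum_comp (W i)).trans (hrow i), fun j => hcol _⟩
  rw [← SetLike.mem_coe, doublyStochastic_eq_convexHull_permMatrix] at hsq
  have hlin : IsLinearMap ℝ fun Y : Matrix r r ℝ => Y.submatrix id e.symm :=
    ⟨fun _ _ => rfl, fun _ _ => rfl⟩
  have hW := Set.mem_image_of_mem (fun Y : Matrix r r ℝ => Y.submatrix id e.symm) hsq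
  rw [hlin.image_convexHull] at hW
  refine convexHull_mono ?_ (by simpa using hW)
  rintro _ ⟨_, ⟨σ, rfl⟩, rfl⟩
  refine ⟨σ.trans e, ?_⟩
  simp [← PEquiv.mul_toMatrix_toPEquiv, ← PEquiv.toMatrix_trans, Equiv.toPEquiv_trans]

section Completion

variable {L M N : ℕ} {X : Matrix (Fin M) (Fin N) ℝ}

/-- When `M = L` (resp. `N = L`) there are no slack columns (rows) and the division by zero
is harmless. -/
noncomputable def stochasticCompletion (L : ℕ) (X : Matrix (Fin M) (Fin N) ℝ) :
    Matrix (Fin M ⊕ Fin (N - L)) (Fin N ⊕ Fin (M - L)) ℝ :=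
  fromBlocks X (of fun i _ => (1 - ∑ j, X i j) / (M - L : ℕ))
    (of fun _ j => (1 - ∑ i, X i j) / (N - L : ℕ)) 0

theorem stochasticCompletion_transpose :
    (stochasticCompletion L X)ᵀ = stochasticCompletion L Xᵀ := by
  ext (j | b) (i | a) <;> rfl

theorem transpose_mem_DSet (hX : X ∈ DSet L M N) : Xᵀ ∈ DSet L N M :=
  ⟨fun j i => hX.1 i j, hX.2.2.1, hX.2.1, sum_comm.trans hX.2.2.2⟩

theorem stochasticCompletion_nonneg (hX : X ∈ DSet L M N) :
    ∀ r c, 0 ≤ stochasticCompletion L X r c := by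
  obtain ⟨hX0, hrow, hcol, -⟩ := hX
  rintro (i | a) (j | b)
  · exact hX0 i j
  · exact div_nonneg (sub_nonneg.mpr (hrow i)) (Nat.cast_nonneg _)
  · exact div_nonneg (sub_nonneg.mpr (hcol j)) (Nat.cast_nonneg _)
  · exact le_rfl

theorem sum_stochasticCompletion_row (hX : X ∈ DSet L M N) (hLN : L ≤ N) :
    ∀ r, ∑ c, stochasticCompletion L X r c = 1 := by
  obtain ⟨-, hrow, -, htotal⟩ := hX
  rintro (i | a) <;>
    simp only [stochasticCompletion, Fintype.sum_sum_type, fromBlocks_apply₁₁, fromBlocks_apply₁₂,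
      fromBlocks_apply₂₁, fromBlocks_apply₂₂, of_apply, Matrix.zero_apply, sum_const, card_univ,
      Fintype.card_fin, nsmul_eq_mul, smul_zero, add_zero]
  · rcases Nat.eq_zero_or_pos (M - L) with hML | hML
    · -- without slack columns the total `L ≥ M` forces every row to be full
      have hfull : ∑ i, ∑ j, X i j = ∑ _ : Fin M, (1 : ℝ) := by
        refine le_antisymm (sum_le_sum fun i _ => hrow i) ?_
        rw [htotal, sum_const, card_univ, Fintype.card_fin, nsmul_one]
        exact_mod_cast Nat.sub_eq_zero_iff_le.mp hML
      simp [(sum_eq_sum_iff_of_le fun i _ => hrow i).mp hfull i (mem_univ i), hML]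
    · field_simp
      ring
  · have hNL : ((N - L : ℕ) : ℝ) ≠ 0 := Nat.cast_ne_zero.mpr a.pos.ne'
    rw [← sum_div, sum_sub_distrib, sum_comm, htotal, sum_const, card_univ, Fintype.card_fin,
      nsmul_one, ← Nat.cast_sub hLN, div_self hNL]

theorem sum_stochasticCompletion_col (hX : X ∈ DSet L M N) (hLM : L ≤ M) :
    ∀ c, ∑ r, stochasticCompletion L X r c = 1 := fun c => by
  simpa [← stochasticCompletion_transpose] using
    sum_stochasticCompletion_row (transpose_mem_DSet hX) hLM c

end Completion

theorem sum_toBlocks₁₁_add_card {m n m' n' : Type*} [Fintype m] [Fintype n] [Fintype m']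
    [Fintype n']
    {A : Matrix (m ⊕ n') (n ⊕ m') ℝ} (hrow : ∀ a, ∑ c, A (Sum.inr a) c = 1)
    (hcol : ∀ j, ∑ r, A r (Sum.inl j) = 1)
    (hcorner : ∑ a, ∑ b, A (Sum.inr a) (Sum.inr b) = 0) :
    ∑ i, ∑ j, A.toBlocks₁₁ i j + Fintype.card n' = Fintype.card n := by
  have hleft : ∑ r, ∑ j, A r (Sum.inl j) = Fintype.card n := by
    rw [sum_comm]
    simp [hcol]
  have hbottom : ∑ a, ∑ c, A (Sum.inr a) c = Fintype.card n' := by simp [hrow]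
  simp only [Fintype.sum_sum_type, sum_add_distrib] at hleft hbottom
  simp only [toBlocks₁₁, of_apply]
  linarith

theorem toBlocks₁₁_mem_PPM {L M N : ℕ} (hLN : L ≤ N)
    {A : Matrix (Fin M ⊕ Fin (N - L)) (Fin N ⊕ Fin (M - L)) ℝ}
    (h01 : ∀ r c, A r c = 0 ∨ A r c = 1) (hrow : ∀ r, ∑ c, A r c = 1)
    (hcol : ∀ c, ∑ r, A r c = 1) (hcorner : ∑ a, ∑ b, A (Sum.inr a) (Sum.inr b) = 0) :
    A.toBlocks₁₁ ∈ PPM L M N := by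
  have hA0 : ∀ r c, 0 ≤ A r c := fun r c => by rcases h01 r c with h | h <;> simp [h]
  refine ⟨fun i j => h01 _ _, fun i => ?_, fun j => ?_, ?_⟩
  · calc ∑ j, A (Sum.inl i) (Sum.inl j)
        ≤ ∑ j, A (Sum.inl i) (Sum.inl j) + ∑ b, A (Sum.inl i) (Sum.inr b) :=
          le_add_of_nonneg_right (sum_nonneg fun b _ => hA0 _ _)
      _ = 1 := (Fintype.sum_sum_type _).symm.trans (hrow _)
  · calc ∑ i, A (Sum.inl i) (Sum.inl j)
        ≤ ∑ i, A (Sum.inl i) (Sum.inl j) + ∑ a, A (Sum.inr a) (Sum.inl j) :=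
          le_add_of_nonneg_right (sum_nonneg fun a _ => hA0 _ _)
      _ = 1 := (Fintype.sum_sum_type _).symm.trans (hcol _)
  · have hcount := sum_toBlocks₁₁_add_card (fun a => hrow _) (fun j => hcol _) hcorner
    rw [Fintype.card_fin, Fintype.card_fin, Nat.cast_sub hLN] at hcount
    linarith

theorem PEquiv.toMatrix_toPEquiv_apply_eq_zero_or_eq_one {r c : Type*} [DecidableEq c]
    (σ : r ≃ c) (i : r) (j : c) :
    σ.toPEquiv.toMatrix i j = (0 : ℝ) ∨ σ.toPEquiv.toMatrix i j = (1 : ℝ) := by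
  rw [PEquiv.toMatrix_apply]
  split_ifs <;> simp

theorem PEquiv.sum_toMatrix_toPEquiv_apply_col {r c : Type*} [Fintype r] [DecidableEq r]
    [DecidableEq c] (σ : r ≃ c) (j : c) : ∑ i, (σ.toPEquiv.toMatrix i j : ℝ) = 1 := by
  simpa using congr_arg (∑ i, · i) (PEquiv.transpose_toMatrix_toPEquiv_apply (α := ℝ) σ j)

theorem DSet_subset_convexHull_PPM {L M N : ℕ} (hLM : L ≤ M) (hLN : L ≤ N) :
    DSet L M N ⊆ convexHull ℝ (PPM L M N) := by
  intro X hX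
  obtain ⟨e⟩ : Nonempty (Fin M ⊕ Fin (N - L) ≃ Fin N ⊕ Fin (M - L)) :=
    Fintype.card_eq.mp (by simp; omega)
  let corner : Matrix (Fin M ⊕ Fin (N - L)) (Fin N ⊕ Fin (M - L)) ℝ →ₗ[ℝ] ℝ :=
    ∑ a, ∑ b, entryLinearMap ℝ ℝ (Sum.inr a) (Sum.inr b)
  have hcorner : ∀ A, corner A = ∑ a, ∑ b, A (Sum.inr a) (Sum.inr b) := fun A => by
    simp [corner]
  have hW := mem_convexHull_toMatrix_of_sum_eq_one e (stochasticCompletion_nonneg hX)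
    (sum_stochasticCompletion_row hX hLN) (sum_stochasticCompletion_col hX hLM)
  have hface := mem_convexHull_inter_ker_of_nonneg corner
    (by
      rintro _ ⟨σ, rfl⟩
      simp only [hcorner, PEquiv.toMatrix_apply]
      positivity)
    hW (by simp [hcorner, stochasticCompletion])
  have hblock : IsLinearMap ℝ
      (toBlocks₁₁ : Matrix (Fin M ⊕ Fin (N - L)) (Fin N ⊕ Fin (M - L)) ℝ → _) :=
    ⟨fun _ _ => rfl, fun _ _ => rfl⟩
  have hX' := Set.mem_image_of_mem toBlocks₁₁ hface
  rw [hblock.image_convexHull] at hX'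
  refine convexHull_mono ?_ hX'
  rintro _ ⟨_, ⟨⟨σ, rfl⟩, hσ⟩, rfl⟩
  exact toBlocks₁₁_mem_PPM hLN (PEquiv.toMatrix_toPEquiv_apply_eq_zero_or_eq_one σ)
    (fun r => by simp) (PEquiv.sum_toMatrix_toPEquiv_apply_col σ) ((hcorner _).symm.trans hσ)

theorem DSet_nonempty {L M N : ℕ} (hLM : L ≤ M) (hLN : L ≤ N) : (DSet L M N).Nonempty := by
  rcases Nat.eq_zero_or_pos L with rfl | hL
  · exact ⟨0, by simp [DSet]⟩
  have hM : (0 : ℝ) < M := by exact_mod_cast hL.trans_le hLM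
  have hN : (0 : ℝ) < N := by exact_mod_cast hL.trans_le hLN
  have hLM' : (L : ℝ) ≤ M := by exact_mod_cast hLM
  have hLN' : (L : ℝ) ≤ N := by exact_mod_cast hLN
  refine ⟨of fun _ _ => (L : ℝ) / (M * N), fun _ _ => by rw [of_apply]; positivity,
    fun i => ?_, fun j => ?_, ?_⟩ <;>
    simp only [of_apply, sum_const, card_univ, Fintype.card_fin, nsmul_eq_mul]
  · rw [mul_div_assoc', div_le_one (by positivity)]
    nlinarith
  · rw [mul_div_assoc', div_le_one (by positivity)]
    nlinarith
  · field_simp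

theorem PPM_finite (L M N : ℕ) : (PPM L M N).Finite := by
  refine (Set.Finite.pi fun _ => Set.Finite.pi fun _ => Set.toFinite ({0, 1} : Set ℝ)).subset ?_
  intro X hX i _ j _
  simpa using hX.1 i j

theorem concave_min_attained_on_PPM_general (L M N : ℕ)
    (hLM : L ≤ M) (hMN : M ≤ N)
    (f : Matrix (Fin M) (Fin N) ℝ → ℝ)
    (hf_conc : ConcaveOn ℝ Set.univ f) :
    ∃ Xstar ∈ PPM L M N, ∀ X ∈ DSet L M N, f Xstar ≤ f X := by
  have hD := DSet_subset_convexHull_PPM hLM (hLM.trans hMN)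
  have hP : (PPM L M N).Nonempty :=
    convexHull_nonempty_iff.mp ((DSet_nonempty hLM (hLM.trans hMN)).mono hD)
  obtain ⟨Xstar, hXstar, hmin⟩ := Set.exists_min_image _ f (PPM_finite L M N) hP
  refine ⟨Xstar, hXstar, fun X hX => ?_⟩
  obtain ⟨Q, hQ, hQX⟩ := hf_conc.exists_le_of_mem_convexHull (Set.subset_univ _) (hD hX)
  exact (hmin Q hQ).trans hQX

/-- Any continuous concave function attains its minimum over `D` at a point of `P`. -/
theorem concave_min_attained_on_PPM (L M N : ℕ)
    (hL : 0 < L) (hLM : L ≤ M) (hMN : M ≤ N)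
    (f : Matrix (Fin M) (Fin N) ℝ → ℝ)
    (hf_cont : Continuous f) (hf_conc : ConcaveOn ℝ Set.univ f) :
    ∃ Xstar ∈ PPM L M N, ∀ X ∈ DSet L M N, f Xstar ≤ f X :=
  concave_min_attained_on_PPM_general L M N hLM hMN f hf_conc
end

section
/- For every partial permutation matrix X ∈ P, every real M×M matrix A_G, and every real N×N matrix A_H, setting U := X J_N Xᵀ one has ‖U ∘ A_G − X A_H Xᵀ‖_F² = tr((A_G ∘ A_G) Uᵀ) − 2 tr(A_G X A_Hᵀ Xᵀ) + tr(X A_H Xᵀ X A_Hᵀ Xᵀ). -/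
open Matrix BigOperators

/-- On `P`, the first relaxation `H₁` agrees with the objective `H₀`:
`‖U ∘ A_G − X A_H Xᵀ‖_F² = tr((A_G ∘ A_G) Uᵀ) − 2 tr(A_G X A_Hᵀ Xᵀ) + tr(X A_H Xᵀ X A_Hᵀ Xᵀ)`. -/
theorem PPM_H1_eq_H0 (L M N : ℕ)
    (hL : 0 < L) (hLM : L ≤ M) (hMN : M ≤ N)
    (X : Matrix (Fin M) (Fin N) ℝ) (hX : X ∈ PPM L M N)
    (AG : Matrix (Fin M) (Fin M) ℝ) (AH : Matrix (Fin N) (Fin N) ℝ) :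
    trace (((X * Jmat N * Xᵀ) ⊙ AG - X * AH * Xᵀ)ᵀ *
        ((X * Jmat N * Xᵀ) ⊙ AG - X * AH * Xᵀ)) =
      trace ((AG ⊙ AG) * (X * Jmat N * Xᵀ)ᵀ) - 2 * trace (AG * X * AHᵀ * Xᵀ) +
        trace (X * AH * Xᵀ * X * AHᵀ * Xᵀ) := by
  obtain ⟨h01, hrow, hcol, hsum⟩ := hX
  have hXnn : ∀ i j, (0:ℝ) ≤ X i j := fun i j => by rcases h01 i j with h | h <;> simp [h]
  set U : Matrix (Fin M) (Fin M) ℝ := X * Jmat N * Xᵀ with hU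
  have hUik : ∀ i k, U i k = (∑ j, X i j) * (∑ l, X k l) := by
    intro i k
    simp [hU, Matrix.mul_apply, Jmat, Finset.sum_mul, Finset.mul_sum,
      Matrix.transpose_apply]
  have hr : ∀ i, (∑ j, X i j) = 0 ∨ (∑ j, X i j) = 1 := by
    intro i
    by_cases h : ∀ j, X i j = 0
    · left; simp [h]
    · right
      push_neg at h
      obtain ⟨j, hj⟩ := h
      have hj1 : X i j = 1 := (h01 i j).resolve_left hj
      have h1 : (1:ℝ) ≤ ∑ j, X i j := by
        calc (1:ℝ) = X i j := hj1.symm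
          _ ≤ ∑ j, X i j := Finset.single_le_sum (fun l _ => hXnn i l) (Finset.mem_univ j)
      linarith [hrow i]
  have hXz : ∀ i, (∑ j, X i j) = 0 → ∀ j, X i j = 0 := by
    intro i h j
    exact (Finset.sum_eq_zero_iff_of_nonneg (fun l _ => hXnn i l)).1 h j (Finset.mem_univ j)
  have keyA : ∀ i k, U i k * U i k = U i k := by
    intro i k
    rw [hUik]
    rcases hr i with h | h <;> rcases hr k with h' | h' <;> simp [h, h']
  have keyB : ∀ (C : Matrix (Fin N) (Fin N) ℝ) (i k : Fin M),
      U i k * (X * C * Xᵀ) i k = (X * C * Xᵀ) i k := by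
    intro C i k
    rcases hr i with h | h
    · have hz : (X * C * Xᵀ) i k = 0 := by
        simp [Matrix.mul_apply, hXz i h]
      simp [hz]
    · rcases hr k with h' | h'
      · have hz : (X * C * Xᵀ) i k = 0 := by
          simp [Matrix.mul_apply, Matrix.transpose_apply, hXz k h']
        simp [hz]
      · rw [hUik, h, h']; ring
  set A : Matrix (Fin M) (Fin M) ℝ := U ⊙ AG with hA
  set B : Matrix (Fin M) (Fin M) ℝ := X * AH * Xᵀ with hB
  have expand : trace ((A - B)ᵀ * (A - B)) =
      trace (Aᵀ * A) - trace (Aᵀ * B) - trace (Bᵀ * A) + trace (Bᵀ * B) := by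
    rw [Matrix.transpose_sub, Matrix.sub_mul, Matrix.mul_sub, Matrix.mul_sub,
      Matrix.trace_sub, Matrix.trace_sub, Matrix.trace_sub]
    ring
  have e1 : trace (Aᵀ * A) = trace ((AG ⊙ AG) * Uᵀ) := by
    simp only [Matrix.trace, Matrix.diag, Matrix.mul_apply, Matrix.transpose_apply,
      Matrix.hadamard_apply, hA]
    rw [Finset.sum_comm]
    refine Finset.sum_congr rfl fun k _ => Finset.sum_congr rfl fun j _ => ?_
    have h1 : U k j * AG k j * (U k j * AG k j) = U k j * U k j * (AG k j * AG k j) := by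
      ring
    rw [h1, keyA]; ring
  have e2 : trace (Aᵀ * B) = trace (AG * X * AHᵀ * Xᵀ) := by
    have step1 : trace (Aᵀ * B) = trace (AGᵀ * B) := by
      simp only [Matrix.trace, Matrix.diag, Matrix.mul_apply, Matrix.transpose_apply,
        Matrix.hadamard_apply, hA]
      refine Finset.sum_congr rfl fun j _ => Finset.sum_congr rfl fun k _ => ?_
      have h1 : U k j * AG k j * B k j = AG k j * (U k j * B k j) := by ring
      rw [h1, keyB AH]
    rw [step1]
    have step2 : trace (AGᵀ * B) = trace (Bᵀ * AG) := by
      rw [← Matrix.trace_transpose (AGᵀ * B), Matrix.transpose_mul, Matrix.transpose_transpose]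
    rw [step2]
    have hBt : Bᵀ = X * AHᵀ * Xᵀ := by
      simp [hB, Matrix.transpose_mul, Matrix.mul_assoc]
    rw [hBt, Matrix.trace_mul_comm, ← Matrix.mul_assoc, ← Matrix.mul_assoc]
  have e2' : trace (Bᵀ * A) = trace (AG * X * AHᵀ * Xᵀ) := by
    rw [← Matrix.trace_transpose (Bᵀ * A), Matrix.transpose_mul, Matrix.transpose_transpose,
      e2]
  have e3 : trace (Bᵀ * B) = trace (X * AH * Xᵀ * X * AHᵀ * Xᵀ) := by
    have hBt : Bᵀ = X * AHᵀ * Xᵀ := by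
      simp [hB, Matrix.transpose_mul, Matrix.mul_assoc]
    rw [hBt, Matrix.trace_mul_comm, hB]
    simp [Matrix.mul_assoc]
  rw [expand, e1, e2, e2', e3]
  ring
end

section
/- For every partial permutation matrix X ∈ P, every real M×M matrix A_G, and every real N×N matrix A_H, setting U := X J_N Xᵀ one has ‖U ∘ A_G − X A_H Xᵀ‖_F² = tr(X Xᵀ A_Gᵀ X Xᵀ A_G X Xᵀ) − 2 tr(X Xᵀ A_Gᵀ X A_H Xᵀ) + tr(X A_Hᵀ Xᵀ X A_H Xᵀ). -/
open Matrix BigOperators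

/-- On `P`, the second relaxation `H₂` agrees with the objective `H₀`:
`‖U ∘ A_G − X A_H Xᵀ‖_F² = tr(X Xᵀ A_Gᵀ X Xᵀ A_G X Xᵀ) − 2 tr(X Xᵀ A_Gᵀ X A_H Xᵀ)
  + tr(X A_Hᵀ Xᵀ X A_H Xᵀ)`. -/
theorem PPM_H2_eq_H0 (L M N : ℕ)
    (hL : 0 < L) (hLM : L ≤ M) (hMN : M ≤ N)
    (X : Matrix (Fin M) (Fin N) ℝ) (hX : X ∈ PPM L M N)
    (AG : Matrix (Fin M) (Fin M) ℝ) (AH : Matrix (Fin N) (Fin N) ℝ) :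
    trace (((X * Jmat N * Xᵀ) ⊙ AG - X * AH * Xᵀ)ᵀ *
        ((X * Jmat N * Xᵀ) ⊙ AG - X * AH * Xᵀ)) =
      trace (X * Xᵀ * AGᵀ * X * Xᵀ * AG * X * Xᵀ) -
        2 * trace (X * Xᵀ * AGᵀ * X * AH * Xᵀ) +
        trace (X * AHᵀ * Xᵀ * X * AH * Xᵀ) := by
  obtain ⟨h01, hrow, hcol, _⟩ := hX
  have hnn : ∀ i j, 0 ≤ X i j := by
    intro i j; rcases h01 i j with h | h <;> simp [h]
  have hsq : ∀ i j, X i j * X i j = X i j := by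
    intro i j; rcases h01 i j with h | h <;> simp [h]
  -- two ones in the same column are impossible
  have hcol0 : ∀ i i' j, i ≠ i' → X i j * X i' j = 0 := by
    intro i i' j hne
    rcases h01 i j with h | h
    · simp [h]
    rcases h01 i' j with h' | h'
    · simp [h']
    exfalso
    have hsub : ∑ k ∈ ({i, i'} : Finset (Fin M)), X k j ≤ ∑ k, X k j :=
      Finset.sum_le_sum_of_subset_of_nonneg (Finset.subset_univ _)
        (fun k _ _ => hnn k j)
    rw [Finset.sum_pair hne, h, h'] at hsub
    have := hcol j
    linarith
  -- two ones in the same row are impossible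
  have hrow0 : ∀ i j j', j ≠ j' → X i j * X i j' = 0 := by
    intro i j j' hne
    rcases h01 i j with h | h
    · simp [h]
    rcases h01 i j' with h' | h'
    · simp [h']
    exfalso
    have hsub : ∑ k ∈ ({j, j'} : Finset (Fin N)), X i k ≤ ∑ k, X i k :=
      Finset.sum_le_sum_of_subset_of_nonneg (Finset.subset_univ _)
        (fun k _ _ => hnn i k)
    rw [Finset.sum_pair hne, h, h'] at hsub
    have := hrow i
    linarith
  -- row sum times an entry is the entry
  have hr : ∀ i j, (∑ l, X i l) * X i j = X i j := by
    intro i j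
    rcases h01 i j with h | h
    · simp [h]
    have h1 : (1 : ℝ) ≤ ∑ l, X i l := by
      calc (1 : ℝ) = X i j := h.symm
        _ ≤ ∑ l, X i l := Finset.single_le_sum (fun k _ => hnn i k) (Finset.mem_univ j)
    have h2 := hrow i
    have : (∑ l, X i l) = 1 := le_antisymm h2 h1
    rw [this, h]; ring
  -- X Xᵀ is diagonal
  have hDoff : ∀ a b, a ≠ b → (X * Xᵀ) a b = 0 := by
    intro a b hne
    simp only [Matrix.mul_apply, Matrix.transpose_apply]
    exact Finset.sum_eq_zero fun j _ => hcol0 a b j hne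
  have hDdiag : ∀ a, (X * Xᵀ) a a = ∑ j, X a j := by
    intro a
    simp only [Matrix.mul_apply, Matrix.transpose_apply]
    exact Finset.sum_congr rfl fun j _ => hsq a j
  -- key identity X Xᵀ X = X
  have hXXX : X * Xᵀ * X = X := by
    ext i j
    simp only [Matrix.mul_apply, Matrix.transpose_apply]
    rw [Finset.sum_eq_single i]
    · rw [show (∑ l, X i l * X i l) = ∑ l, X i l from
        Finset.sum_congr rfl fun l _ => hsq i l, hr]
    · intro k _ hki
      rw [show (∑ l, X i l * X k l) = 0 from
        Finset.sum_eq_zero fun l _ => hcol0 i k l (fun h => hki h.symm)]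
      ring
    · intro h; exact absurd (Finset.mem_univ i) h
  -- the Hadamard term is (X Xᵀ) AG (X Xᵀ)
  have hHad : (X * Jmat N * Xᵀ) ⊙ AG = (X * Xᵀ) * AG * (X * Xᵀ) := by
    ext i i'
    have hJ : (X * Jmat N * Xᵀ) i i' = (∑ j, X i j) * (∑ j, X i' j) := by
      simp only [Matrix.mul_apply, Matrix.transpose_apply, Jmat, Matrix.of_apply,
        mul_one, Finset.sum_mul, Finset.mul_sum]
    have hR : ((X * Xᵀ) * AG * (X * Xᵀ)) i i' = (∑ j, X i j) * AG i i' * (∑ j, X i' j) := by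
      have h1 : ((X * Xᵀ) * AG) i i' = (∑ j, X i j) * AG i i' := by
        rw [Matrix.mul_apply, Finset.sum_eq_single i]
        · rw [hDdiag]
        · intro k _ hki
          rw [hDoff i k (fun h => hki h.symm)]; ring
        · intro h; exact absurd (Finset.mem_univ i) h
      rw [Matrix.mul_apply, Finset.sum_eq_single i']
      · rw [h1, hDdiag]
      · intro k _ hki
        rw [hDoff k i' hki]; ring
      · intro h; exact absurd (Finset.mem_univ i') h
    rw [Matrix.hadamard_apply, hJ, hR]
    ring
  -- absorption lemmas
  have h1 : ∀ {k : ℕ} (C : Matrix (Fin N) (Fin k) ℝ), X * (Xᵀ * (X * C)) = X * C := by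
    intro k C
    rw [← Matrix.mul_assoc, ← Matrix.mul_assoc, hXXX]
  have h2 : ∀ {k : ℕ} (C : Matrix (Fin M) (Fin k) ℝ), Xᵀ * (X * (Xᵀ * C)) = Xᵀ * C := by
    intro k C
    have hXt : Xᵀ * X * Xᵀ = Xᵀ := by
      have := congrArg Matrix.transpose hXXX
      simpa [Matrix.transpose_mul, Matrix.mul_assoc] using this
    calc Xᵀ * (X * (Xᵀ * C)) = (Xᵀ * X * Xᵀ) * C := by
          rw [Matrix.mul_assoc, Matrix.mul_assoc]
      _ = Xᵀ * C := by rw [hXt]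
  rw [hHad]
  simp only [Matrix.transpose_sub, Matrix.transpose_mul, Matrix.transpose_transpose,
    Matrix.sub_mul, Matrix.mul_sub, Matrix.trace_sub, Matrix.mul_assoc, h1, h2]
  have h3 : trace (X * (AHᵀ * (Xᵀ * (AG * (X * Xᵀ))))) =
      trace (X * (Xᵀ * (AGᵀ * (X * (AH * Xᵀ))))) := by
    rw [← Matrix.trace_transpose (X * (AHᵀ * (Xᵀ * (AG * (X * Xᵀ)))))]
    simp [Matrix.transpose_mul, Matrix.transpose_transpose, Matrix.mul_assoc]
  rw [h3]
  ring
end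

section
/- For every partial permutation matrix X ∈ P, one has ‖(X Xᵀ) A_G (X Xᵀ) − X A_H Xᵀ‖_F = ‖(X J_N Xᵀ) ∘ A_G − X A_H Xᵀ‖_F for every real M×M matrix A_G and every real N×N matrix A_H; in particular, the two relaxations H₁ and H₂ coincide with H₀ (and hence with each other) at every point of P. -/
open Matrix BigOperators

/-- On `P`, the Frobenius norms `‖(X Xᵀ) A_G (X Xᵀ) − X A_H Xᵀ‖_F` and
`‖(X J_N Xᵀ) ∘ A_G − X A_H Xᵀ‖_F` coincide, for all `A_G`, `A_H`. -/
theorem PPM_relaxations_coincide (L M N : ℕ)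
    (hL : 0 < L) (hLM : L ≤ M) (hMN : M ≤ N)
    (X : Matrix (Fin M) (Fin N) ℝ) (hX : X ∈ PPM L M N) :
    ∀ (AG : Matrix (Fin M) (Fin M) ℝ) (AH : Matrix (Fin N) (Fin N) ℝ),
      Real.sqrt (trace ((X * Xᵀ * AG * (X * Xᵀ) - X * AH * Xᵀ)ᵀ *
          (X * Xᵀ * AG * (X * Xᵀ) - X * AH * Xᵀ))) =
      Real.sqrt (trace (((X * Jmat N * Xᵀ) ⊙ AG - X * AH * Xᵀ)ᵀ *
          ((X * Jmat N * Xᵀ) ⊙ AG - X * AH * Xᵀ))) := by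
  intro AG AH
  obtain ⟨h01, hrow, hcol, hsum⟩ := hX
  -- X Xᵀ is the diagonal matrix of row sums
  have horth : ∀ i j : Fin M, i ≠ j → ∀ k, X i k * X j k = 0 := by
    intro i j hij k
    rcases h01 i k with h1 | h1
    · simp [h1]
    rcases h01 j k with h2 | h2
    · simp [h2]
    exfalso
    have hle : X i k + X j k ≤ ∑ i', X i' k := by
      have := Finset.sum_le_sum_of_subset_of_nonneg
        (s := ({i, j} : Finset (Fin M))) (t := Finset.univ)
        (f := fun i' => X i' k) (Finset.subset_univ _)
        (fun x _ _ => by rcases h01 x k with h | h <;> simp [h])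
      rwa [Finset.sum_pair hij] at this
    have := hcol k
    rw [h1, h2] at hle
    linarith
  have hdiag : X * Xᵀ = Matrix.diagonal (fun i => ∑ k, X i k) := by
    ext i j
    by_cases hij : i = j
    · subst hij
      simp only [Matrix.mul_apply, Matrix.transpose_apply, Matrix.diagonal_apply_eq]
      refine Finset.sum_congr rfl fun k _ => ?_
      rcases h01 i k with h | h <;> simp [h]
    · simp only [Matrix.mul_apply, Matrix.transpose_apply,
        Matrix.diagonal_apply_ne _ hij]
      exact Finset.sum_eq_zero fun k _ => horth i j hij k
  have hEq : X * Xᵀ * AG * (X * Xᵀ) = (X * Jmat N * Xᵀ) ⊙ AG := by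
    rw [hdiag]
    ext i j
    have hJ : (X * Jmat N * Xᵀ) i j = (∑ k, X i k) * (∑ k, X j k) := by
      simp only [Matrix.mul_apply, Matrix.transpose_apply, Jmat, Matrix.of_apply,
        mul_one]
      rw [← Finset.mul_sum]
    simp only [Matrix.hadamard_apply, hJ, Matrix.diagonal_mul, Matrix.mul_diagonal]
    ring
  rw [hEq]
end
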